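/- Let Δ* be a group with exactly three subgroups Δ0, Δ1, Δ2 of index 2, let G be a finite group with a unique subgroup H of index 2, and let L ⊴ Δ* with Δ*/L ≅ G and L ≤ Δ1. Then for K := Δ0 ∩ L = Δ2 ∩ L we have Δ1/K ≅ H × C2 and Δ2/K ≅ G; in particular if G ≇ H × C2 the two quotients Δ1/K and Δ2/K are non-isomorphic groups of the same order. -/

import Mathlib

open Subgroup

open scoped Classical

private noncomputable def chi {D : Type*} [Group D] (K : Subgroup D) (hK : K.index = 2) :
    D →* Multiplicative (ZMod 2) :=
  MonoidHom.mk' (fun x => Multiplicative.ofAdd (if x ∈ K then 0 else 1)) (by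
    intro a b
    rw [← ofAdd_add]
    congr 1
    by_cases ha : a ∈ K <;> by_cases hb : b ∈ K <;>
      simp [ha, hb, Subgroup.mul_mem_iff_of_index_two hK] <;> decide)

private lemma chi_eq_one_iff {D : Type*} [Group D] {K : Subgroup D} (hK : K.index = 2)
    (x : D) : chi K hK x = 1 ↔ x ∈ K := by
  show Multiplicative.ofAdd (if x ∈ K then 0 else 1) = 1 ↔ x ∈ K
  by_cases h : x ∈ K <;> simp [h] <;> decide

private lemma chi_eq_of_not_mem {D : Type*} [Group D] {K : Subgroup D} (hK : K.index = 2)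
    {x : D} (h : x ∉ K) : chi K hK x = Multiplicative.ofAdd 1 := by
  show Multiplicative.ofAdd (if x ∈ K then 0 else 1) = Multiplicative.ofAdd 1
  simp [h]

private lemma chi_eq_of_mem {D : Type*} [Group D] {K : Subgroup D} (hK : K.index = 2)
    {x : D} (h : x ∈ K) : chi K hK x = 1 := (chi_eq_one_iff hK x).mpr h

private lemma zmod2_cases (c : Multiplicative (ZMod 2)) :
    c = 1 ∨ c = Multiplicative.ofAdd 1 := by revert c; decide

private lemma zmod2_flip {a c : Multiplicative (ZMod 2)} (h : a ≠ c) :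
    a * Multiplicative.ofAdd 1 = c := by revert a c; decide

private lemma eq_of_le_of_index_two {D : Type*} [Group D] {A B : Subgroup D}
    (h : A ≤ B) (hA : A.index = 2) (hB : B.index = 2) : A = B := by
  have h1 := Subgroup.relIndex_mul_index h
  rw [hA, hB] at h1
  have : A.relIndex B = 1 := by omega
  exact le_antisymm h (Subgroup.relIndex_eq_one.mp this)

theorem stmt2 {D : Type*} [Group D] {G : Type*} [Group G] [Finite G]
    (Δ0 Δ1 Δ2 : Subgroup D)
    (hne01 : Δ0 ≠ Δ1) (hne02 : Δ0 ≠ Δ2) (hne12 : Δ1 ≠ Δ2)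
    (hthree : {H : Subgroup D | H.index = 2} = {Δ0, Δ1, Δ2})
    (H : Subgroup G) (hH : H.index = 2) (hHuniq : ∀ H' : Subgroup G, H'.index = 2 → H' = H)
    (L : Subgroup D) (π : D →* G) (hπ : Function.Surjective π) (hker : π.ker = L)
    (hL1 : L ≤ Δ1) :
    Δ0 ⊓ L = Δ2 ⊓ L ∧
    (∃ φ1 : Δ1 →* (H × Multiplicative (ZMod 2)),
        Function.Surjective φ1 ∧ φ1.ker = (Δ0 ⊓ L).subgroupOf Δ1) ∧
    (∃ φ2 : Δ2 →* G,
        Function.Surjective φ2 ∧ φ2.ker = (Δ0 ⊓ L).subgroupOf Δ2) ∧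
    ((¬ ∃ e : G ≃* (H × Multiplicative (ZMod 2)), True) →
      Nat.card H * 2 = Nat.card G ∧
      ¬ ∃ e : (H × Multiplicative (ZMod 2)) ≃* G, True) := by
  have hmem : ∀ K : Subgroup D, K.index = 2 ↔ (K = Δ0 ∨ K = Δ1 ∨ K = Δ2) := by
    intro K
    constructor
    · intro h
      have : K ∈ {H : Subgroup D | H.index = 2} := h
      rw [hthree] at this
      simpa using this
    · intro h
      have : K ∈ ({Δ0, Δ1, Δ2} : Set (Subgroup D)) := by simpa using h
      rw [← hthree] at this
      exact this
  have h0 : Δ0.index = 2 := (hmem Δ0).mpr (Or.inl rfl)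
  have h1 : Δ1.index = 2 := (hmem Δ1).mpr (Or.inr (Or.inl rfl))
  have h2 : Δ2.index = 2 := (hmem Δ2).mpr (Or.inr (Or.inr rfl))
  have key : ∀ K : Subgroup D, K.index = 2 → L ≤ K → K = H.comap π := by
    intro K hK hLK
    have hkerK : π.ker ≤ K := hker ▸ hLK
    have hmap : (K.map π).index = 2 := by rw [K.index_map_eq hπ hkerK]; exact hK
    have hKH : K.map π = H := hHuniq _ hmap
    calc K = (K.map π).comap π := by
            rw [Subgroup.comap_map_eq, hker, sup_of_le_left hLK]
      _ = H.comap π := by rw [hKH]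
  have hΔ1 : Δ1 = H.comap π := key Δ1 h1 hL1
  have hnL0 : ¬ L ≤ Δ0 := fun h => hne01 (((key Δ0 h0 h).trans (hΔ1).symm))
  have hnL2 : ¬ L ≤ Δ2 := fun h => hne12 ((hΔ1.trans (key Δ2 h2 h).symm))
  have hLiff : ∀ x ∈ L, (x ∈ Δ0 ↔ x ∈ Δ2) := by
    have hmemker : ∀ x, x ∈ (chi Δ0 h0 * chi Δ2 h2).ker ↔ (x ∈ Δ0 ↔ x ∈ Δ2) := by
      intro x
      rw [MonoidHom.mem_ker, MonoidHom.mul_apply]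
      by_cases hx0 : x ∈ Δ0 <;> by_cases hx2 : x ∈ Δ2
      · rw [chi_eq_of_mem h0 hx0, chi_eq_of_mem h2 hx2]
        simp [hx0, hx2]
      · rw [chi_eq_of_mem h0 hx0, chi_eq_of_not_mem h2 hx2]
        simp only [one_mul]
        constructor
        · intro h; exact absurd h (by decide)
        · intro h; exact absurd (h.mp hx0) hx2
      · rw [chi_eq_of_not_mem h0 hx0, chi_eq_of_mem h2 hx2]
        simp only [mul_one]
        constructor
        · intro h; exact absurd h (by decide)
        · intro h; exact absurd (h.mpr hx2) hx0
      · rw [chi_eq_of_not_mem h0 hx0, chi_eq_of_not_mem h2 hx2]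
        constructor
        · intro _; exact ⟨fun h => absurd h hx0, fun h => absurd h hx2⟩
        · intro _; decide
    have hχ : (chi Δ0 h0 * chi Δ2 h2).ker.index = 2 := by
      rw [Subgroup.index_ker]
      have hsurj : Function.Surjective (chi Δ0 h0 * chi Δ2 h2) := by
        obtain ⟨a, haΔ0, haΔ2⟩ : ∃ a ∈ Δ0, a ∉ Δ2 := by
          rw [← SetLike.not_le_iff_exists]
          intro hle
          exact hne02 (eq_of_le_of_index_two hle h0 h2)
        intro c
        rcases zmod2_cases c with rfl | rfl
        · exact ⟨1, map_one _⟩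
        · refine ⟨a, ?_⟩
          rw [MonoidHom.mul_apply, chi_eq_of_mem h0 haΔ0, chi_eq_of_not_mem h2 haΔ2,
            one_mul]
      rw [MonoidHom.range_eq_top_of_surjective _ hsurj]
      rw [Nat.card_congr Subgroup.topEquiv.toEquiv, Nat.card_eq_fintype_card]
      rfl
    have hkerΔ1 : (chi Δ0 h0 * chi Δ2 h2).ker = Δ1 := by
      rcases (hmem _).mp hχ with h | h | h
      · exfalso
        apply hne02
        apply eq_of_le_of_index_two _ h0 h2
        intro x hx
        have hxk : x ∈ (chi Δ0 h0 * chi Δ2 h2).ker := by rw [h]; exact hx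
        exact ((hmemker x).mp hxk).mp hx
      · exact h
      · exfalso
        apply hne02
        refine (eq_of_le_of_index_two ?_ h2 h0).symm
        intro x hx
        have hxk : x ∈ (chi Δ0 h0 * chi Δ2 h2).ker := by rw [h]; exact hx
        exact ((hmemker x).mp hxk).mpr hx
    intro x hx
    have hxk : x ∈ (chi Δ0 h0 * chi Δ2 h2).ker := by rw [hkerΔ1]; exact hL1 hx
    exact (hmemker x).mp hxk
  have part1 : Δ0 ⊓ L = Δ2 ⊓ L := by
    ext x
    simp only [Subgroup.mem_inf]
    constructor
    · rintro ⟨hx0, hxL⟩; exact ⟨(hLiff x hxL).mp hx0, hxL⟩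
    · rintro ⟨hx2, hxL⟩; exact ⟨(hLiff x hxL).mpr hx2, hxL⟩
  obtain ⟨l, hlL, hl0⟩ : ∃ l ∈ L, l ∉ Δ0 := by
    rw [← SetLike.not_le_iff_exists]; exact hnL0
  have hπker : ∀ x, π x = 1 ↔ x ∈ L := by
    intro x; rw [← hker]; exact Iff.rfl
  refine ⟨part1, ?_, ?_, ?_⟩
  · -- φ1
    have hΔ1le : Δ1 ≤ H.comap π := le_of_eq hΔ1
    have hd : ∀ x : Δ1, π x ∈ H := fun x => Subgroup.mem_comap.mp (hΔ1le x.2)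
    refine ⟨((π.comp Δ1.subtype).codRestrict H hd).prod ((chi Δ0 h0).comp Δ1.subtype),
      ?_, ?_⟩
    · rintro ⟨h, c⟩
      obtain ⟨d, hdpi⟩ := hπ h.1
      have hdΔ1 : d ∈ Δ1 := by rw [hΔ1, Subgroup.mem_comap, hdpi]; exact h.2
      by_cases hdc : chi Δ0 h0 d = c
      · exact ⟨⟨d, hdΔ1⟩, Prod.ext (Subtype.ext hdpi) hdc⟩
      · refine ⟨⟨d * l, mul_mem hdΔ1 (hL1 hlL)⟩, Prod.ext (Subtype.ext ?_) ?_⟩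
        · show π (d * l) = h.1
          rw [map_mul, (hπker l).mpr hlL, mul_one, hdpi]
        · show chi Δ0 h0 (d * l) = c
          rw [map_mul, chi_eq_of_not_mem h0 hl0]
          exact zmod2_flip hdc
    · ext x
      simp only [MonoidHom.mem_ker, Subgroup.mem_subgroupOf, Subgroup.mem_inf,
        MonoidHom.prod_apply, Prod.mk_eq_one]
      constructor
      · rintro ⟨hf, hg⟩
        have hfx : π x = 1 := congrArg Subtype.val hf
        have hxL : (x : D) ∈ L := (hπker x).mp hfx
        have hx0 : (x : D) ∈ Δ0 := (chi_eq_one_iff h0 (x : D)).mp hg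
        exact ⟨hx0, hxL⟩
      · rintro ⟨hx0, hxL⟩
        exact ⟨Subtype.ext ((hπker x).mpr hxL), chi_eq_of_mem h0 hx0⟩
  · -- φ2
    refine ⟨π.comp Δ2.subtype, ?_, ?_⟩
    · obtain ⟨m, hmL, hm2⟩ : ∃ m ∈ L, m ∉ Δ2 := by
        rw [← SetLike.not_le_iff_exists]; exact hnL2
      intro gg
      obtain ⟨d, hdpi⟩ := hπ gg
      by_cases hd2 : d ∈ Δ2
      · exact ⟨⟨d, hd2⟩, hdpi⟩
      · have hdm : d * m ∈ Δ2 := by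
          rw [Subgroup.mul_mem_iff_of_index_two h2]
          simp [hd2, hm2]
        refine ⟨⟨d * m, hdm⟩, ?_⟩
        show π (d * m) = gg
        rw [map_mul, (hπker m).mpr hmL, mul_one, hdpi]
    · ext x
      simp only [MonoidHom.mem_ker, MonoidHom.comp_apply, Subgroup.mem_subgroupOf]
      rw [part1]
      simp only [Subgroup.mem_inf]
      constructor
      · intro hfx
        exact ⟨x.2, (hπker x).mp hfx⟩
      · rintro ⟨_, hxL⟩
        exact (hπker x).mpr hxL
  · intro hne
    constructor
    · rw [← hH]; exact H.card_mul_index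
    · rintro ⟨e, -⟩
      exact hne ⟨e.symm, trivial⟩
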